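/- arXiv:1411.0233 — 3 statements merged into one kernel-verified Lean document; each statement's English description precedes it below -/
import Mathlib

section
/- Let f_n, g_n, h_n : ℝ → [0,∞) be sequences of measurable functions such that f_n → 0 pointwise a.e., g_n → g and h_n → h pointwise a.e. for measurable g, h : ℝ → [0,∞). Assume that for every ε > 0 there exists C(ε) > 0 with f_n ≤ ε g_n + C(ε) h_n for all n, that sup_n ∫_ℝ g_n dx < ∞, and that ∫_ℝ h_n dx → ∫_ℝ h dx with ∫_ℝ h dx < ∞. Then ∫_ℝ f_n dx → 0, i.e. f_n → 0 in L¹(ℝ). -/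
/-! Fix `ε > 0` and `C = C(ε)`. Fatou's lemma for the nonnegative functions `(C h_n - f_n)⁺`,
which tend to `C h` a.e., gives `C ∫ h ≤ liminf ∫ (C h_n - f_n)⁺`, while
`∫ f_n + ∫ (C h_n - f_n)⁺ ≤ ε ∫ g_n + C ∫ h_n`. As `∫ h_n → ∫ h < ∞`, the term `C ∫ h` cancels
and `limsup ∫ f_n ≤ ε sup_n ∫ g_n`; now let `ε → 0`. -/

open MeasureTheory Filter

open scoped Topology ENNReal

theorem ENNReal.le_limsup_add (u v : ℕ → ℝ≥0∞) :
    limsup u atTop + liminf v atTop ≤ limsup (u + v) atTop := by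
  rw [liminf_eq_iSup_iInf_of_nat, ENNReal.add_iSup]
  refine iSup_le fun n => ?_
  calc limsup u atTop + ⨅ i ≥ n, v i
      = limsup (fun k => u k + ⨅ i ≥ n, v i) atTop :=
        (limsup_add_const atTop u _ (by isBoundedDefault) (by isBoundedDefault)).symm
    _ ≤ limsup (u + v) atTop := by
        refine limsup_le_limsup ?_ (by isBoundedDefault) (by isBoundedDefault)
        filter_upwards [eventually_ge_atTop n] with k hk
        exact add_le_add le_rfl (biInf_le v hk)

theorem ENNReal.tendsto_zero_of_forall_limsup_le_ofReal_mul {ι : Type*} {l : Filter ι}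
    {u : ι → ℝ≥0∞} {M : ℝ} (h : ∀ ε > 0, limsup u l ≤ ENNReal.ofReal (ε * M)) :
    Tendsto u l (𝓝 0) := by
  have hM : Tendsto (fun ε : ℝ => ENNReal.ofReal (ε * M)) (𝓝[>] 0) (𝓝 0) :=
    ENNReal.ofReal_zero ▸ ENNReal.tendsto_ofReal
      (tendsto_nhdsWithin_of_tendsto_nhds ((continuous_mul_const M).tendsto' 0 0 (zero_mul M)))
  exact tendsto_of_le_liminf_of_limsup_le zero_le
    (ge_of_tendsto hM (eventually_nhdsWithin_of_forall h))

section
variable {α : Type*} [MeasurableSpace α] {μ : Measure α}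

theorem limsup_lintegral_le_of_le_add_of_tendsto {F G H : ℕ → α → ℝ≥0∞} {Hlim : α → ℝ≥0∞}
    {K : ℝ≥0∞} (hF : ∀ n, Measurable (F n)) (hH : ∀ n, Measurable (H n))
    (hle : ∀ n, F n ≤ G n + H n) (hGK : ∀ n, ∫⁻ x, G n x ∂μ ≤ K)
    (hF0 : ∀ᵐ x ∂μ, Tendsto (F · x) atTop (𝓝 0))
    (hHlim : ∀ᵐ x ∂μ, Tendsto (H · x) atTop (𝓝 (Hlim x)))
    (hHint : Tendsto (fun n => ∫⁻ x, H n x ∂μ) atTop (𝓝 (∫⁻ x, Hlim x ∂μ)))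
    (hHlim_fin : ∫⁻ x, Hlim x ∂μ ≠ ∞) :
    limsup (fun n => ∫⁻ x, F n x ∂μ) atTop ≤ K := by
  set a := fun n => ∫⁻ x, F n x ∂μ
  set b := fun n => ∫⁻ x, H n x - F n x ∂μ
  have hab : ∀ n, a n + b n ≤ K + ∫⁻ x, H n x ∂μ := fun n =>
    calc a n + b n = ∫⁻ x, F n x + (H n x - F n x) ∂μ := (lintegral_add_left (hF n) _).symm
      _ ≤ ∫⁻ x, G n x + H n x ∂μ := lintegral_mono fun x => by
          rw [add_tsub_eq_max]; exact max_le (hle n x) le_add_self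
      _ = ∫⁻ x, G n x ∂μ + ∫⁻ x, H n x ∂μ := lintegral_add_right _ (hH n)
      _ ≤ K + ∫⁻ x, H n x ∂μ := add_le_add_left (hGK n) _
  have hfatou : ∫⁻ x, Hlim x ∂μ ≤ liminf b atTop :=
    calc ∫⁻ x, Hlim x ∂μ = ∫⁻ x, liminf (fun n => H n x - F n x) atTop ∂μ := by
          refine lintegral_congr_ae ?_
          filter_upwards [hF0, hHlim] with x hFx hHx
          simpa using ((ENNReal.Tendsto.sub hHx hFx (Or.inr ENNReal.zero_ne_top)).liminf_eq).symm
      _ ≤ liminf b atTop := lintegral_liminf_le fun n => (hH n).sub (hF n)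
  refine (ENNReal.add_le_add_iff_right hHlim_fin).1 ?_
  calc limsup a atTop + ∫⁻ x, Hlim x ∂μ ≤ limsup a atTop + liminf b atTop := by gcongr
    _ ≤ limsup (a + b) atTop := ENNReal.le_limsup_add a b
    _ ≤ limsup (fun n => K + ∫⁻ x, H n x ∂μ) atTop := limsup_le_limsup (.of_forall hab)
    _ = K + ∫⁻ x, Hlim x ∂μ := (hHint.const_add K).limsup_eq

theorem limsup_lintegral_ofReal_le_of_le_add {f g h : ℕ → α → ℝ} {hlim : α → ℝ} {M : ℝ}
    (hfm : ∀ n, Measurable (f n)) (hhm : ∀ n, Measurable (h n))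
    (hg0 : ∀ n, 0 ≤ᵐ[μ] g n) (hh0 : ∀ n, 0 ≤ᵐ[μ] h n) (hhlim0 : 0 ≤ᵐ[μ] hlim)
    (hle : ∀ n x, f n x ≤ g n x + h n x)
    (hgint : ∀ n, Integrable (g n) μ) (hgM : ∀ n, ∫ x, g n x ∂μ ≤ M)
    (hhint : ∀ n, Integrable (h n) μ) (hhlimint : Integrable hlim μ)
    (hfae : ∀ᵐ x ∂μ, Tendsto (f · x) atTop (𝓝 0))
    (hhae : ∀ᵐ x ∂μ, Tendsto (h · x) atTop (𝓝 (hlim x)))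
    (hhconv : Tendsto (fun n => ∫ x, h n x ∂μ) atTop (𝓝 (∫ x, hlim x ∂μ))) :
    limsup (fun n => ∫⁻ x, ENNReal.ofReal (f n x) ∂μ) atTop ≤ ENNReal.ofReal M := by
  have hHs : ∀ n, ∫⁻ x, ENNReal.ofReal (h n x) ∂μ = ENNReal.ofReal (∫ x, h n x ∂μ) := fun n =>
    (ofReal_integral_eq_lintegral_ofReal (hhint n) (hh0 n)).symm
  have hHlim : ∫⁻ x, ENNReal.ofReal (hlim x) ∂μ = ENNReal.ofReal (∫ x, hlim x ∂μ) :=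
    (ofReal_integral_eq_lintegral_ofReal hhlimint hhlim0).symm
  refine limsup_lintegral_le_of_le_add_of_tendsto (G := fun n x => ENNReal.ofReal (g n x))
    (fun n => (hfm n).ennreal_ofReal) (fun n => (hhm n).ennreal_ofReal)
    (fun n x => (ENNReal.ofReal_le_ofReal (hle n x)).trans ENNReal.ofReal_add_le) (fun n => ?_)
    ?_ ?_ ?_ (by rw [hHlim]; exact ENNReal.ofReal_ne_top)
  · rw [← ofReal_integral_eq_lintegral_ofReal (hgint n) (hg0 n)]
    exact ENNReal.ofReal_le_ofReal (hgM n)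
  · filter_upwards [hfae] with x hx
    simpa using ENNReal.tendsto_ofReal hx
  · filter_upwards [hhae] with x hx
    exact ENNReal.tendsto_ofReal hx
  · simpa only [hHs, hHlim] using ENNReal.tendsto_ofReal hhconv

end

theorem tendsto_integral_zero_of_fatou_general
    (f g h : ℕ → ℝ → ℝ) (hlim : ℝ → ℝ)
    (hf0 : ∀ n x, 0 ≤ f n x) (hg0 : ∀ n x, 0 ≤ g n x) (hh0 : ∀ n x, 0 ≤ h n x)
    (hfm : ∀ n, Measurable (f n)) (hhm : ∀ n, Measurable (h n))
    (hhlim0 : ∀ x, 0 ≤ hlim x)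
    (hfae : ∀ᵐ x : ℝ, Tendsto (fun n => f n x) atTop (nhds 0))
    (hhae : ∀ᵐ x : ℝ, Tendsto (fun n => h n x) atTop (nhds (hlim x)))
    (hdom : ∀ ε : ℝ, 0 < ε → ∃ C : ℝ, 0 < C ∧ ∀ n x, f n x ≤ ε * g n x + C * h n x)
    (hgint : ∀ n, Integrable (g n)) (hhint : ∀ n, Integrable (h n))
    (hhlimint : Integrable hlim)
    (hgsup : ∃ M : ℝ, ∀ n, ∫ x, g n x ≤ M)
    (hhconv : Tendsto (fun n => ∫ x, h n x) atTop (nhds (∫ x, hlim x))) :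
    Tendsto (fun n => ∫ x, f n x) atTop (nhds 0) := by
  obtain ⟨M, hM⟩ := hgsup
  have hlimsup : ∀ ε > 0,
      limsup (fun n => ∫⁻ x, ENNReal.ofReal (f n x)) atTop ≤ ENNReal.ofReal (ε * M) := by
    intro ε hε
    obtain ⟨C, hC, hle⟩ := hdom ε hε
    refine limsup_lintegral_ofReal_le_of_le_add hfm (fun n => (hhm n).const_mul C)
      (fun n => .of_forall fun x => mul_nonneg hε.le (hg0 n x))
      (fun n => .of_forall fun x => mul_nonneg hC.le (hh0 n x))
      (.of_forall fun x => mul_nonneg hC.le (hhlim0 x)) hle (fun n => (hgint n).const_mul ε)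
      (fun n => ?_) (fun n => (hhint n).const_mul C) (hhlimint.const_mul C) hfae ?_ ?_
    · rw [integral_const_mul]
      exact mul_le_mul_of_nonneg_left (hM n) hε.le
    · filter_upwards [hhae] with x hx using hx.const_mul C
    · simpa only [integral_const_mul] using hhconv.const_mul C
  have hlintegral := ENNReal.tendsto_zero_of_forall_limsup_le_ofReal_mul hlimsup
  rw [← ENNReal.toReal_zero]
  refine ((ENNReal.tendsto_toReal ENNReal.zero_ne_top).comp hlintegral).congr fun n => ?_
  exact (integral_eq_lintegral_of_nonneg_ae (.of_forall (hf0 n)) (hfm n).aestronglyMeasurable).symm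

/-- Generalized dominated convergence via Fatou (Lemma 2.5): if `0 ≤ f_n ≤ ε g_n + C(ε) h_n`,
`f_n → 0` a.e., `g_n → g`, `h_n → h` a.e., `sup_n ∫ g_n < ∞` and `∫ h_n → ∫ h`, then
`∫ f_n → 0`, i.e. `f_n → 0` in `L¹(ℝ)`. -/
theorem tendsto_integral_zero_of_fatou
    (f g h : ℕ → ℝ → ℝ) (glim hlim : ℝ → ℝ)
    (hf0 : ∀ n x, 0 ≤ f n x) (hg0 : ∀ n x, 0 ≤ g n x) (hh0 : ∀ n x, 0 ≤ h n x)
    (hfm : ∀ n, Measurable (f n)) (hgm : ∀ n, Measurable (g n)) (hhm : ∀ n, Measurable (h n))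
    (hglimm : Measurable glim) (hhlimm : Measurable hlim)
    (hglim0 : ∀ x, 0 ≤ glim x) (hhlim0 : ∀ x, 0 ≤ hlim x)
    (hfae : ∀ᵐ x : ℝ, Tendsto (fun n => f n x) atTop (nhds 0))
    (hgae : ∀ᵐ x : ℝ, Tendsto (fun n => g n x) atTop (nhds (glim x)))
    (hhae : ∀ᵐ x : ℝ, Tendsto (fun n => h n x) atTop (nhds (hlim x)))
    (hdom : ∀ ε : ℝ, 0 < ε → ∃ C : ℝ, 0 < C ∧ ∀ n x, f n x ≤ ε * g n x + C * h n x)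
    (hgint : ∀ n, Integrable (g n)) (hhint : ∀ n, Integrable (h n))
    (hhlimint : Integrable hlim)
    (hgsup : ∃ M : ℝ, ∀ n, ∫ x, g n x ≤ M)
    (hhconv : Tendsto (fun n => ∫ x, h n x) atTop (nhds (∫ x, hlim x))) :
    Tendsto (fun n => ∫ x, f n x) atTop (nhds 0) :=
  tendsto_integral_zero_of_fatou_general f g h hlim hf0 hg0 hh0 hfm hhm hhlim0 hfae hhae hdom hgint
    hhint hhlimint hgsup hhconv
end

section
/- Let g : ℝ → ℝ be continuous, nonnegative on ℝ⁺, with g(s)/s non-decreasing on (0,∞). Then the function H(s) := s g(s) - 2 G(s), where G(s) = ∫_0^s g(t) dt, is non-decreasing on [0,∞). -/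
open intervalIntegral

/-- If `g` is continuous, nonnegative on `ℝ⁺`, with `g(s)/s` non-decreasing on `(0,∞)`,
then `H(s) = s g(s) - 2 G(s)`, `G(s) = ∫_0^s g`, is non-decreasing on `[0,∞)`. -/
theorem nehari_monotone (g : ℝ → ℝ) (hg : Continuous g)
    (hg0 : ∀ s : ℝ, 0 < s → 0 ≤ g s)
    (hmono : MonotoneOn (fun s => g s / s) (Set.Ioi (0 : ℝ))) :
    MonotoneOn (fun s => s * g s - 2 * ∫ t in (0 : ℝ)..s, g t) (Set.Ici (0 : ℝ)) := by
  intro a ha b hb hab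
  simp only
  have ha' : (0:ℝ) ≤ a := ha
  rcases eq_or_lt_of_le (ha'.trans hab) with hb0 | hb0
  · have haz : a = 0 := le_antisymm (hab.trans hb0.symm.le) ha'
    simp [haz, ← hb0]
  set c := g b / b with hc
  have hIa : IntervalIntegrable g MeasureTheory.volume a b := hg.intervalIntegrable a b
  have hI2 : IntervalIntegrable (fun t => c * t) MeasureTheory.volume a b :=
    (continuous_const.mul continuous_id).intervalIntegrable a b
  have hae : ∀ᵐ t ∂(MeasureTheory.volume.restrict (Set.Icc a b)), g t ≤ c * t := by
    have h0 : ∀ᵐ t : ℝ, t ≠ 0 := by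
      have : MeasureTheory.volume ({0} : Set ℝ) = 0 := MeasureTheory.measure_singleton 0
      rw [MeasureTheory.ae_iff]
      simpa using this
    filter_upwards [MeasureTheory.ae_restrict_of_ae h0,
      MeasureTheory.ae_restrict_mem measurableSet_Icc] with t ht htmem
    have ht0 : 0 < t := lt_of_le_of_ne (ha'.trans htmem.1) (Ne.symm ht)
    have hd : g t / t ≤ g b / b := hmono ht0 hb0 htmem.2
    have := (div_le_div_iff₀ ht0 hb0).1 hd
    rw [hc, div_mul_eq_mul_div, le_div_iff₀ hb0]
    linarith
  have hint : (∫ t in a..b, g t) ≤ c * (b ^ 2 / 2 - a ^ 2 / 2) := by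
    have h1 := intervalIntegral.integral_mono_ae_restrict hab hIa hI2 hae
    have h2 : (∫ t in a..b, c * t) = c * (b ^ 2 / 2 - a ^ 2 / 2) := by
      rw [intervalIntegral.integral_const_mul, integral_id]; ring
    linarith [h1, h2.le, h2.ge]
  have hsplit : (∫ t in (0:ℝ)..b, g t) =
      (∫ t in (0:ℝ)..a, g t) + ∫ t in a..b, g t :=
    (intervalIntegral.integral_add_adjacent_intervals (hg.intervalIntegrable 0 a) hIa).symm
  rw [hsplit]
  have hcb : c * b = g b := div_mul_cancel₀ _ hb0.ne'
  rcases eq_or_lt_of_le ha' with haz | haz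
  · -- a = 0
    subst haz
    simp only [intervalIntegral.integral_same]
    have h3 : c * ((0:ℝ) ^ 2 / 2) = 0 := by ring
    nlinarith [hint, hcb, mul_le_mul_of_nonneg_right hcb.le hb0.le, hg0 b hb0]
  · -- 0 < a
    have hd : g a / a ≤ c := hmono haz hb0 hab
    have hga : g a / a * a = g a := div_mul_cancel₀ _ haz.ne'
    nlinarith [hint, hcb, mul_le_mul_of_nonneg_right hd (sq_nonneg a), sq_nonneg a,
      mul_le_mul_of_nonneg_left hd (mul_pos haz haz).le]
end

section
/- Let α > 0, r > 1, q > 2. Suppose g : ℝ → ℝ satisfies g(s) ≤ (1/2)s + C' (e^{α s²} - 1) s^{q-1} for s ≥ 0 for some C' > 0, with g = 0 on ℝ⁻; let G be its primitive. Then there exists C > 0 such that G(s) ≤ (1/4)s² + C (e^{r α s²} - 1)^{1/r} s^q for all s ≥ 0. -/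
lemma exp_sub_one_le_rpow_aux {r x : ℝ} (hr : 1 ≤ r) (hx : 0 ≤ x) :
    Real.exp x - 1 ≤ (Real.exp (r * x) - 1) ^ (1 / r) := by
  have hr0 : (0:ℝ) < r := lt_of_lt_of_le one_pos hr
  have ha : 0 ≤ Real.exp x - 1 := by linarith [Real.one_le_exp hx]
  have key : (Real.exp x - 1) ^ r + 1 ≤ Real.exp (r * x) := by
    have h := NNReal.add_rpow_le_rpow_add (⟨Real.exp x - 1, ha⟩ : NNReal) 1 hr
    have h' : (Real.exp x - 1) ^ r + (1:ℝ) ^ r ≤ ((Real.exp x - 1) + 1) ^ r := by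
      exact_mod_cast h
    have h2 : ((Real.exp x - 1) + 1 : ℝ) = Real.exp x := by ring
    rw [h2, Real.one_rpow, ← Real.exp_mul, mul_comm x r] at h'
    exact h'
  have key2 : (Real.exp x - 1) ^ r ≤ Real.exp (r * x) - 1 := by linarith
  calc Real.exp x - 1 = ((Real.exp x - 1) ^ r) ^ (1 / r) := by
        rw [one_div, Real.rpow_rpow_inv ha (ne_of_gt hr0)]
    _ ≤ (Real.exp (r * x) - 1) ^ (1 / r) :=
        Real.rpow_le_rpow (Real.rpow_nonneg ha r) key2 (by positivity)

/-- Growth estimate on the primitive used in the mountain-pass geometry: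
if `g(s) ≤ ½ s + C' (e^{α s²} - 1) s^{q-1}` for `s ≥ 0` and `g = 0` on `ℝ⁻`, then
`G(s) ≤ ¼ s² + C (e^{r α s²} - 1)^{1/r} s^q` for all `s ≥ 0`. -/
theorem primitive_growth_estimate (α r q C' : ℝ) (hα : 0 < α) (hr : 1 < r) (hq : 2 < q)
    (hC' : 0 < C') (g : ℝ → ℝ) (hg : Continuous g)
    (hgneg : ∀ s : ℝ, s ≤ 0 → g s = 0)
    (hgle : ∀ s : ℝ, 0 ≤ s → g s ≤ 1 / 2 * s + C' * (Real.exp (α * s ^ 2) - 1) * s ^ (q - 1)) :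
    ∃ C : ℝ, 0 < C ∧ ∀ s : ℝ, 0 ≤ s →
      (∫ t in (0 : ℝ)..s, g t) ≤
        1 / 4 * s ^ 2 + C * (Real.exp (r * α * s ^ 2) - 1) ^ (1 / r) * s ^ q := by
  refine ⟨C', hC', fun s hs => ?_⟩
  rcases eq_or_lt_of_le hs with h0 | h0
  · subst h0
    simp [Real.zero_rpow (by positivity : (1:ℝ)/r ≠ 0),
      Real.zero_rpow (by positivity : q ≠ 0)]
  have hes : 0 ≤ Real.exp (α * s ^ 2) - 1 := by
    linarith [Real.one_le_exp (by positivity : (0:ℝ) ≤ α * s ^ 2)]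
  set M := C' * (Real.exp (α * s ^ 2) - 1) * s ^ (q - 1) with hM
  have hq1 : (0:ℝ) ≤ q - 1 := by linarith
  have hMnonneg : 0 ≤ M := by
    exact mul_nonneg (mul_nonneg hC'.le hes) (Real.rpow_nonneg hs _)
  -- pointwise bound on [0, s]
  have hbound : ∀ t ∈ Set.Icc (0:ℝ) s, g t ≤ 1 / 2 * t + M := by
    intro t ht
    refine (hgle t ht.1).trans ?_
    have h1 : Real.exp (α * t ^ 2) - 1 ≤ Real.exp (α * s ^ 2) - 1 := by
      have ht2 : t ^ 2 ≤ s ^ 2 := by nlinarith [ht.1, ht.2]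
      have : α * t ^ 2 ≤ α * s ^ 2 := mul_le_mul_of_nonneg_left ht2 hα.le
      linarith [Real.exp_le_exp.2 this]
    have h2 : t ^ (q - 1) ≤ s ^ (q - 1) := Real.rpow_le_rpow ht.1 ht.2 hq1
    have het : 0 ≤ Real.exp (α * t ^ 2) - 1 := by
      linarith [Real.one_le_exp (by positivity : (0:ℝ) ≤ α * t ^ 2)]
    have : C' * (Real.exp (α * t ^ 2) - 1) * t ^ (q - 1) ≤ M := by
      rw [hM]
      gcongr
      exact Real.rpow_nonneg ht.1 _
    linarith
  -- integral bound
  have hint : (∫ t in (0:ℝ)..s, g t) ≤ ∫ t in (0:ℝ)..s, (1 / 2 * t + M) := by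
    apply intervalIntegral.integral_mono_on hs (hg.intervalIntegrable _ _)
      (((continuous_const.mul continuous_id).add continuous_const).intervalIntegrable _ _)
    exact hbound
  have hcalc : (∫ t in (0:ℝ)..s, (1 / 2 * t + M)) = 1 / 4 * s ^ 2 + M * s := by
    rw [intervalIntegral.integral_add (by
        exact (continuous_const.mul continuous_id).intervalIntegrable _ _)
      (intervalIntegrable_const), intervalIntegral.integral_const_mul, integral_id,
      intervalIntegral.integral_const, smul_eq_mul]
    ring
  have hMs : M * s = C' * (Real.exp (α * s ^ 2) - 1) * s ^ q := by
    rw [hM, mul_assoc, ← Real.rpow_add_one (ne_of_gt h0)]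
    ring
  have hkey : Real.exp (α * s ^ 2) - 1 ≤ (Real.exp (r * α * s ^ 2) - 1) ^ (1 / r) := by
    have := exp_sub_one_le_rpow_aux (x := α * s ^ 2) hr.le (by positivity)
    rwa [← mul_assoc] at this
  have hfinal : C' * (Real.exp (α * s ^ 2) - 1) * s ^ q ≤
      C' * (Real.exp (r * α * s ^ 2) - 1) ^ (1 / r) * s ^ q := by
    gcongr
  linarith [hint, hcalc.le, hMs.le, hfinal]
end
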